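/- For the symmetric Kaczmarz-Tanabe iteration, the projected errors satisfy P_1 e_{k+1} = Q^T Q P_1 e_k, and consequently ||P_1 e_{k+1}||_2 ≤ σ_max^2 ||P_1 e_k||_2, where σ_max is the largest singular value of Q strictly less than 1. -/
import Mathlib


open Matrix Filter

noncomputable def projMat {n : ℕ} (a : Fin n → ℝ) : Matrix (Fin n) (Fin n) ℝ :=
  1 - (a ⬝ᵥ a)⁻¹ • Matrix.vecMulVec a a

noncomputable def vnorm {n : ℕ} (x : Fin n → ℝ) : ℝ := Real.sqrt (x ⬝ᵥ x)

/-- `x ∈ N(A)^⊥`: `x` is orthogonal to every vector of the null space of `A`. -/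
def inNullPerp {m n : ℕ} (A : Matrix (Fin m) (Fin n) ℝ) (x : Fin n → ℝ) : Prop :=
  ∀ z : Fin n → ℝ, A.mulVec z = 0 → x ⬝ᵥ z = 0

/-- `P_k` (0-indexed): the projection onto the hyperplane orthogonal to row `k` of `A`. -/
noncomputable def Pnat {m n : ℕ} (A : Matrix (Fin m) (Fin n) ℝ) (k : ℕ) :
    Matrix (Fin n) (Fin n) ℝ :=
  if h : k < m then projMat (A ⟨k, h⟩) else 1

/-- descending product `f (lo+len-1) * ⋯ * f (lo+1) * f lo` -/
noncomputable def prodDesc {α : Type*} [Monoid α] (f : ℕ → α) (lo : ℕ) : ℕ → α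
  | 0 => 1
  | k + 1 => f (lo + k) * prodDesc f lo k

/-- ascending product `f lo * f (lo+1) * ⋯ * f (lo+len-1)` -/
noncomputable def prodAsc {α : Type*} [Monoid α] (f : ℕ → α) (lo : ℕ) : ℕ → α
  | 0 => 1
  | k + 1 => prodAsc f lo k * f (lo + k)

/-- `Q_j = P_m ⋯ P_{j+1}` (paper indices); here `j : Fin m` is 0-indexed. -/
noncomputable def Qmat {m n : ℕ} (A : Matrix (Fin m) (Fin n) ℝ) (j : Fin m) :
    Matrix (Fin n) (Fin n) ℝ :=
  prodDesc (Pnat A) ((j : ℕ) + 1) (m - 1 - (j : ℕ))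

/-- `Q = P_m P_{m-1} ⋯ P_1`. -/
noncomputable def Qfull {m n : ℕ} (A : Matrix (Fin m) (Fin n) ℝ) : Matrix (Fin n) (Fin n) ℝ :=
  prodDesc (Pnat A) 0 m

/-- `A_S = (Q_1 a_1, …, Q_m a_m)ᵀ`. -/
noncomputable def ASmat {m n : ℕ} (A : Matrix (Fin m) (Fin n) ℝ) : Matrix (Fin m) (Fin n) ℝ :=
  fun i => (Qmat A i).mulVec (A i)

/-- `M = diag (1/‖a_1‖², …, 1/‖a_m‖²)`. -/
noncomputable def Mdiag {m n : ℕ} (A : Matrix (Fin m) (Fin n) ℝ) : Matrix (Fin m) (Fin m) ℝ :=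
  Matrix.diagonal fun i => (A i ⬝ᵥ A i)⁻¹

/-- `Q̄_1 = Q̄_m = 0`, `Q̄_2 = I`, `Q̄_i = P_2 ⋯ P_{i-1}` (paper indices); `i : Fin m` 0-indexed. -/
noncomputable def barQmat {m n : ℕ} (A : Matrix (Fin m) (Fin n) ℝ) (i : Fin m) :
    Matrix (Fin n) (Fin n) ℝ :=
  if (i : ℕ) = 0 ∨ (i : ℕ) = m - 1 then 0 else prodAsc (Pnat A) 1 ((i : ℕ) - 1)

/-- `Q̄ = P_2 P_3 ⋯ P_{m-1}`. -/
noncomputable def barQfull {m n : ℕ} (A : Matrix (Fin m) (Fin n) ℝ) : Matrix (Fin n) (Fin n) ℝ :=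
  prodAsc (Pnat A) 1 (m - 2)

/-- `Ā_S = (Q̄_1 a_1, …, Q̄_m a_m)ᵀ`. -/
noncomputable def barASmat {m n : ℕ} (A : Matrix (Fin m) (Fin n) ℝ) : Matrix (Fin m) (Fin n) ℝ :=
  fun i => (barQmat A i).mulVec (A i)

/-- `h_{p,q} = a_pᵀ a_q / ‖a_q‖²`. -/
noncomputable def hcoef {m n : ℕ} (A : Matrix (Fin m) (Fin n) ℝ) (p q : Fin m) : ℝ :=
  (A p ⬝ᵥ A q) / (A q ⬝ᵥ A q)


section AuxLemmas

variable {n : ℕ}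

lemma dotProduct_self_nonneg' (x : Fin n → ℝ) : 0 ≤ x ⬝ᵥ x :=
  Finset.sum_nonneg fun i _ => mul_self_nonneg _

lemma vnorm_nonneg' (x : Fin n → ℝ) : 0 ≤ vnorm x := Real.sqrt_nonneg _

lemma vnorm_mul_self (x : Fin n → ℝ) : vnorm x * vnorm x = x ⬝ᵥ x :=
  Real.mul_self_sqrt (dotProduct_self_nonneg' x)

lemma dot_le_vnorm_mul_vnorm (u v : Fin n → ℝ) : u ⬝ᵥ v ≤ vnorm u * vnorm v := by
  have h := Real.sum_mul_le_sqrt_mul_sqrt Finset.univ u v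
  simpa [vnorm, dotProduct, pow_two] using h

lemma vecMulVec_mulVec' (a x : Fin n → ℝ) : (Matrix.vecMulVec a a) *ᵥ x = (a ⬝ᵥ x) • a := by
  ext j
  simp only [Matrix.mulVec, Matrix.vecMulVec_apply, dotProduct, Pi.smul_apply, smul_eq_mul,
    Finset.sum_mul]
  exact Finset.sum_congr rfl fun k _ => by ring

lemma projMat_mulVec (a x : Fin n → ℝ) :
    (projMat a) *ᵥ x = x - ((a ⬝ᵥ a)⁻¹ * (a ⬝ᵥ x)) • a := by
  unfold projMat
  rw [Matrix.sub_mulVec, Matrix.one_mulVec, Matrix.smul_mulVec, vecMulVec_mulVec',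
    smul_smul]

lemma projMat_transpose (a : Fin n → ℝ) : (projMat a)ᵀ = projMat a := by
  unfold projMat
  rw [Matrix.transpose_sub, Matrix.transpose_smul, Matrix.transpose_one]
  congr 1
  ext i j
  simp [Matrix.vecMulVec_apply, mul_comm]

lemma projMat_idem {a : Fin n → ℝ} (ha : a ≠ 0) : projMat a * projMat a = projMat a := by
  have h : a ⬝ᵥ a ≠ 0 := by rwa [ne_eq, dotProduct_self_eq_zero]
  have hVV : Matrix.vecMulVec a a * Matrix.vecMulVec a a = (a ⬝ᵥ a) • Matrix.vecMulVec a a := by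
    ext i j
    simp only [Matrix.mul_apply, Matrix.vecMulVec_apply, Matrix.smul_apply, smul_eq_mul,
      dotProduct]
    rw [Finset.sum_mul]
    refine Finset.sum_congr rfl fun k _ => by ring
  set c := (a ⬝ᵥ a)⁻¹ with hc
  set V := Matrix.vecMulVec a a with hV
  have hcc : (c * c) * (a ⬝ᵥ a) = c := by
    rw [mul_assoc, inv_mul_cancel₀ h, mul_one]
  show (1 - c • V) * (1 - c • V) = 1 - c • V
  have : (c • V) * (c • V) = c • V := by
    rw [Matrix.smul_mul, Matrix.mul_smul, hVV, smul_smul, smul_smul, hcc]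
  rw [sub_mul, one_mul, mul_sub, mul_one, this]
  simp

lemma Pnat_transpose {m : ℕ} (A : Matrix (Fin m) (Fin n) ℝ) (k : ℕ) :
    (Pnat A k)ᵀ = Pnat A k := by
  unfold Pnat
  split
  · exact projMat_transpose _
  · exact Matrix.transpose_one

lemma Pnat_idem {m : ℕ} (A : Matrix (Fin m) (Fin n) ℝ) (hA : ∀ i, A i ≠ 0) (k : ℕ) :
    Pnat A k * Pnat A k = Pnat A k := by
  unfold Pnat
  split
  · exact projMat_idem (hA _)
  · exact one_mul 1

lemma prodDesc_transpose {m : ℕ} (A : Matrix (Fin m) (Fin n) ℝ) (lo k : ℕ) :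
    (prodDesc (Pnat A) lo k)ᵀ = prodAsc (Pnat A) lo k := by
  induction k with
  | zero => simp [prodDesc, prodAsc]
  | succ k ih =>
    rw [prodDesc, prodAsc, Matrix.transpose_mul, ih, Pnat_transpose]

lemma prodDesc_succ_lo {α : Type*} [Monoid α] (f : ℕ → α) (lo k : ℕ) :
    prodDesc f lo (k + 1) = prodDesc f (lo + 1) k * f lo := by
  induction k with
  | zero => simp [prodDesc]
  | succ k ih =>
    rw [show prodDesc f lo (k+1+1) = f (lo + (k+1)) * prodDesc f lo (k+1) from rfl, ih,
      show prodDesc f (lo + 1) (k + 1) = f (lo + 1 + k) * prodDesc f (lo + 1) k from rfl,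
      ← mul_assoc, show lo + 1 + k = lo + (k + 1) by omega]

lemma prodAsc_succ_lo {α : Type*} [Monoid α] (f : ℕ → α) (lo k : ℕ) :
    prodAsc f lo (k + 1) = f lo * prodAsc f (lo + 1) k := by
  induction k with
  | zero => simp [prodAsc]
  | succ k ih =>
    have h1 : prodAsc f lo (k + 1 + 1) = prodAsc f lo (k + 1) * f (lo + (k + 1)) := rfl
    have h2 : prodAsc f (lo + 1) (k + 1) = prodAsc f (lo + 1) k * f (lo + 1 + k) := rfl
    rw [h1, ih, h2, mul_assoc, show lo + (k + 1) = lo + 1 + k by omega]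

lemma key_identity {m : ℕ} (A : Matrix (Fin m) (Fin n) ℝ) (hm : 3 ≤ m) (hA : ∀ i, A i ≠ 0) :
    Pnat A 0 * (barQfull A * Qfull A) = ((Qfull A)ᵀ * Qfull A) * Pnat A 0 := by
  obtain ⟨t, rfl⟩ : ∃ t, m = t + 3 := ⟨m - 3, by omega⟩
  set P := Pnat A with hP
  set D := prodDesc P 1 (t + 1) with hD
  set B := prodAsc P 1 (t + 1) with hB
  have hbar : barQfull A = B := by
    unfold barQfull
    rw [show t + 3 - 2 = t + 1 by omega]
  have hQ : Qfull A = P (t + 2) * D * P 0 := by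
    have h1 : Qfull A = prodDesc P (0 + 1) (t + 2) * P 0 := prodDesc_succ_lo P 0 (t + 2)
    have h2 : prodDesc P (0 + 1) (t + 2) = P (0 + 1 + (t + 1)) * prodDesc P (0 + 1) (t + 1) := rfl
    rw [h1, h2, show (0:ℕ) + 1 = 1 from rfl, show 1 + (t + 1) = t + 2 by omega]
  have hQT : (Qfull A)ᵀ = P 0 * (B * P (t + 2)) := by
    have h1 : (Qfull A)ᵀ = prodAsc P 0 (t + 3) := prodDesc_transpose A 0 (t + 3)
    have h2 : prodAsc P 0 (t + 3) = P 0 * prodAsc P (0 + 1) (t + 2) := prodAsc_succ_lo P 0 (t + 2)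
    have h3 : prodAsc P (0 + 1) (t + 2) = prodAsc P (0 + 1) (t + 1) * P (0 + 1 + (t + 1)) := rfl
    rw [h1, h2, h3, show (0:ℕ) + 1 = 1 from rfl, show 1 + (t + 1) = t + 2 by omega]
  have hP0 : P 0 * P 0 = P 0 := Pnat_idem A hA 0
  have hPm : P (t + 2) * P (t + 2) = P (t + 2) := Pnat_idem A hA (t + 2)
  rw [hbar, hQT, hQ]
  simp only [← mul_assoc]
  rw [mul_assoc _ (P (t + 2)) (P (t + 2)), hPm, mul_assoc _ (P 0) (P 0), hP0]

lemma projMat_perp {m : ℕ} (A : Matrix (Fin m) (Fin n) ℝ) (i : Fin m)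
    {x : Fin n → ℝ} (hx : inNullPerp A x) : inNullPerp A ((projMat (A i)) *ᵥ x) := by
  intro z hz
  have haz : A i ⬝ᵥ z = 0 := congrFun hz i
  rw [projMat_mulVec, sub_dotProduct, smul_dotProduct, haz, hx z hz]
  simp

end AuxLemmas

set_option maxHeartbeats 1600000 in
/-- for the symmetric sweep `S = P_2 ⋯ P_{m-1} P_m ⋯ P_1` with errors
`e_{k+1} = S e_k`, `e_k ∈ N(A)^⊥`, one has `P_1 e_{k+1} = Qᵀ Q P_1 e_k` and
`‖P_1 e_{k+1}‖ ≤ σ² ‖P_1 e_k‖`. -/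
theorem stmt17 {m n : ℕ} (A : Matrix (Fin m) (Fin n) ℝ) (hm : 3 ≤ m)
    (hA : ∀ i, A i ≠ 0) (σ : ℝ) (hσ0 : 0 ≤ σ) (hσ1 : σ < 1)
    (hσ : ∀ x : Fin n → ℝ, inNullPerp A x → vnorm ((Qfull A).mulVec x) ≤ σ * vnorm x)
    (e : ℕ → Fin n → ℝ)
    (hiter : ∀ k : ℕ, e (k + 1) = (barQfull A * Qfull A).mulVec (e k))
    (hperp : ∀ k : ℕ, inNullPerp A (e k)) :
    ∀ k : ℕ,
      (projMat (A ⟨0, by omega⟩)).mulVec (e (k + 1)) =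
        ((Qfull A)ᵀ * Qfull A).mulVec ((projMat (A ⟨0, by omega⟩)).mulVec (e k)) ∧
      vnorm ((projMat (A ⟨0, by omega⟩)).mulVec (e (k + 1))) ≤
        σ ^ 2 * vnorm ((projMat (A ⟨0, by omega⟩)).mulVec (e k)) := by
  intro k
  have h0m : (0 : ℕ) < m := by omega
  have hPnat0 : Pnat A 0 = projMat (A ⟨0, by omega⟩) := by
    unfold Pnat
    rw [dif_pos h0m]
  set a0 : Fin n → ℝ := A ⟨0, by omega⟩ with ha0
  set x : Fin n → ℝ := (projMat a0) *ᵥ (e k) with hxdef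
  set y : Fin n → ℝ := (projMat a0) *ᵥ (e (k + 1)) with hydef
  have heq : y = ((Qfull A)ᵀ * Qfull A) *ᵥ x := by
    rw [hydef, hxdef, hiter k, Matrix.mulVec_mulVec, Matrix.mulVec_mulVec, ← hPnat0,
      key_identity A hm hA]
  refine ⟨heq, ?_⟩
  have hx : inNullPerp A x := projMat_perp A ⟨0, by omega⟩ (hperp k)
  have hy : inNullPerp A y := projMat_perp A ⟨0, by omega⟩ (hperp (k + 1))
  have hdot : y ⬝ᵥ y = (Qfull A *ᵥ x) ⬝ᵥ (Qfull A *ᵥ y) := by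
    nth_rewrite 1 [heq]
    rw [← Matrix.mulVec_mulVec, Matrix.mulVec_transpose]
    exact (Matrix.dotProduct_mulVec (Qfull A *ᵥ x) (Qfull A) y).symm
  have hQx : vnorm (Qfull A *ᵥ x) ≤ σ * vnorm x := hσ x hx
  have hQy : vnorm (Qfull A *ᵥ y) ≤ σ * vnorm y := hσ y hy
  have hchain : vnorm y * vnorm y ≤ (σ ^ 2 * vnorm x) * vnorm y := by
    calc vnorm y * vnorm y = y ⬝ᵥ y := vnorm_mul_self y
      _ = (Qfull A *ᵥ x) ⬝ᵥ (Qfull A *ᵥ y) := hdot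
      _ ≤ vnorm (Qfull A *ᵥ x) * vnorm (Qfull A *ᵥ y) := dot_le_vnorm_mul_vnorm _ _
      _ ≤ (σ * vnorm x) * (σ * vnorm y) := by
          exact mul_le_mul hQx hQy (vnorm_nonneg' _) (mul_nonneg hσ0 (vnorm_nonneg' _))
      _ = (σ ^ 2 * vnorm x) * vnorm y := by ring
  rcases eq_or_lt_of_le (vnorm_nonneg' y) with h | h
  · rw [← h]
    exact mul_nonneg (pow_nonneg hσ0 2) (vnorm_nonneg' _)
  · exact le_of_mul_le_mul_right hchain h
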